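/- arXiv:1303.0020 — 6 statements merged into one kernel-verified Lean document; each statement's English description precedes it below -/
import Mathlib

section
/- Let D be a club subset of [0,ω₁), let π_D(α) = min(D ∩ [α,ω₁)), and define S_D : C₀(D) → C₀[0,ω₁) by S_D(g) = g ∘ π_D. Then S_D is a well-defined linear isometry, and composing with the restriction map R_D : C₀[0,ω₁) → C₀(D), f ↦ f|_D, one has R_D ∘ S_D = identity on C₀(D). -/
open Set
open scoped ZeroAtInfty

noncomputable section

/-- The first uncountable ordinal ω₁. -/
def omega1 : Ordinal := (Cardinal.aleph 1).ord

/-- The space [0,ω₁) of countable ordinals, with the order topology. -/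
abbrev Omega1 : Type _ := ↥(Set.Iio omega1)

/-- A subset of [0,ω₁) is club if it is closed in the order topology and
unbounded (cofinal). -/
def IsClubSet (D : Set Omega1) : Prop :=
  IsClosed D ∧ ∀ α : Omega1, ∃ β ∈ D, α ≤ β

/-!
The map π = π_D is a retraction of [0,ω₁) onto D. It is continuous because every `Iic α` is open
(so π is continuous from the right by monotonicity) and because a point outside the closed set D
has a left neighbourhood missing D, on which π is constant. It is proper because π ≥ id and the
initial segments `Iic α` are compact. Composition with a proper surjection is an isometry of the
C₀ spaces, and R_D ∘ S_D = id since π fixes D.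
-/

open Filter Topology

namespace ZeroAtInftyContinuousMap

variable {X Y E : Type*} [TopologicalSpace X] [TopologicalSpace Y] [SeminormedAddCommGroup E]

lemma norm_comp_of_surjective (g : C₀(Y, E)) {r : CocompactMap X Y}
    (hr : Function.Surjective r) : ‖g.comp r‖ = ‖g‖ := by
  simp only [← norm_toBCF_eq_norm, BoundedContinuousFunction.norm_eq_iSup_norm]
  exact hr.iSup_comp fun y => ‖g y‖

end ZeroAtInftyContinuousMap

namespace Ordinal

variable {o : Ordinal}

lemma isOpen_Iic_Iio (a : Iio o) : IsOpen (Iic a) := by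
  show IsOpen (Subtype.val ⁻¹' Iic (a : Ordinal))
  rw [← Order.Iio_succ]
  exact isOpen_Iio.preimage continuous_subtype_val

lemma isCompact_Iic_Iio (a : Iio o) : IsCompact (Iic a) := by
  rw [Topology.IsEmbedding.subtypeVal.isCompact_iff]
  show IsCompact (Subtype.val '' (Subtype.val ⁻¹' Iic (a : Ordinal)))
  rw [Subtype.image_preimage_coe, inter_eq_right.2 (Iic_subset_Iio.2 a.2)]
  rw [← Icc_bot]
  exact isCompact_Icc

end Ordinal

section LeastUpperElement

variable {X : Type*} [LinearOrder X] {D : Set X} {π : X → X}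

lemma apply_eq_self_of_isLeast_inter_Ici (hπ : ∀ a, IsLeast (D ∩ Ici a) (π a)) {d : X}
    (hd : d ∈ D) : π d = d :=
  (hπ d).unique ⟨⟨hd, le_rfl⟩, fun _ hx => hx.2⟩

lemma monotone_of_isLeast_inter_Ici (hπ : ∀ a, IsLeast (D ∩ Ici a) (π a)) : Monotone π :=
  fun _ b hab => (hπ _).2 ⟨(hπ b).1.1, hab.trans (hπ b).1.2⟩

variable [TopologicalSpace X] [OrderTopology X]

lemma eventually_apply_le_of_isLeast_inter_Ici (hIic : ∀ a : X, IsOpen (Iic a))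
    (hD : IsClosed D) (hπ : ∀ a, IsLeast (D ∩ Ici a) (π a)) {a : X} (ha : a ∉ D) :
    ∀ᶠ x in 𝓝 a, π a ≤ π x := by
  have hIic_mem : Iic a ∈ 𝓝 a := (hIic a).mem_nhds le_rfl
  rcases isBot_or_exists_lt a with hbot | hlt
  · filter_upwards [hIic_mem] with x hx
    rw [le_antisymm hx (hbot x)]
  · obtain ⟨l, hla, hl⟩ := exists_Ioc_subset_of_mem_nhds (hD.isOpen_compl.mem_nhds ha) hlt
    filter_upwards [Ioi_mem_nhds hla, hIic_mem] with x hlx hxa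
    refine (hπ a).2 ⟨(hπ x).1.1, not_lt.1 fun hπx => ?_⟩
    exact hl ⟨hlx.trans_le (hπ x).1.2, hπx.le⟩ (hπ x).1.1

lemma continuous_of_isLeast_inter_Ici (hIic : ∀ a : X, IsOpen (Iic a)) (hD : IsClosed D)
    (hπ : ∀ a, IsLeast (D ∩ Ici a) (π a)) : Continuous π := by
  refine continuous_iff_continuousAt.2 fun a => tendsto_order.2 ⟨fun b hb => ?_, fun b hb => ?_⟩
  · rcases lt_or_ge b a with hba | hab
    · filter_upwards [Ioi_mem_nhds hba] with x hx using hx.trans_le (hπ x).1.2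
    · have ha : a ∉ D := fun ha =>
        (hab.trans_lt hb).ne (apply_eq_self_of_isLeast_inter_Ici hπ ha).symm
      filter_upwards [eventually_apply_le_of_isLeast_inter_Ici hIic hD hπ ha] with x hx
      exact hb.trans_le hx
  · filter_upwards [(hIic a).mem_nhds le_rfl] with x hx
    exact (monotone_of_isLeast_inter_Ici hπ hx).trans_lt hb

lemma tendsto_cocompact_of_le_apply (hIic : ∀ a : X, IsCompact (Iic a)) (hπ : ∀ a, a ≤ π a) :
    Tendsto π (cocompact X) (cocompact X) := by
  refine hasBasis_cocompact.tendsto_right_iff.2 fun K hK => ?_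
  rcases K.eq_empty_or_nonempty with rfl | hne
  · simp
  obtain ⟨m, -, hm⟩ := hK.exists_isGreatest hne
  filter_upwards [(hIic m).compl_mem_cocompact] with x hx hπx
  exact hx ((hπ x).trans (hm hπx))

def cocompactMapOfIsLeastInterIci (hIicOpen : ∀ a : X, IsOpen (Iic a))
    (hIicCompact : ∀ a : X, IsCompact (Iic a)) (hD : IsClosed D)
    (hπ : ∀ a, IsLeast (D ∩ Ici a) (π a)) : CocompactMap X D where
  toFun a := ⟨π a, (hπ a).1.1⟩
  continuous_toFun := (continuous_of_isLeast_inter_Ici hIicOpen hD hπ).subtype_mk _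
  cocompact_tendsto' :=
    Tendsto.of_tendsto_comp (g := Subtype.val)
      (tendsto_cocompact_of_le_apply hIicCompact fun a => (hπ a).1.2)
      (comap_cocompact_le continuous_subtype_val)

end LeastUpperElement

/-- For a club subset D of [0,ω₁) and π_D(α) = min(D ∩ [α,ω₁)), the map
S_D : C₀(D) → C₀[0,ω₁), g ↦ g ∘ π_D, is a well-defined linear isometry, and
composing with the restriction map R_D : C₀[0,ω₁) → C₀(D), f ↦ f|_D, gives
R_D ∘ S_D = id on C₀(D). -/
theorem SD_linear_isometry_and_RD_SD_eq_id {D : Set Omega1} (hD : IsClubSet D)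
    (π : Omega1 → Omega1) (hπD : ∀ α, π α ∈ D)
    (hπ : ∀ α : Omega1, α ≤ π α ∧ ∀ β ∈ D, α ≤ β → π α ≤ β) :
    ∃ (S : C₀(↥D, ℝ) →ₗᵢ[ℝ] C₀(Omega1, ℝ))
      (R : C₀(Omega1, ℝ) →ₗ[ℝ] C₀(↥D, ℝ)),
      (∀ (g : C₀(↥D, ℝ)) (α : Omega1), S g α = g ⟨π α, hπD α⟩) ∧
      (∀ (f : C₀(Omega1, ℝ)) (β : ↥D), R f β = f ↑β) ∧
      (∀ g : C₀(↥D, ℝ), R (S g) = g) := by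
  have hleast : ∀ α, IsLeast (D ∩ Ici α) (π α) :=
    fun α => ⟨⟨hπD α, (hπ α).1⟩, fun β hβ => (hπ α).2 β hβ.1 hβ.2⟩
  have hfix (d : D) : (⟨π d, hπD d⟩ : D) = d :=
    Subtype.ext (apply_eq_self_of_isLeast_inter_Ici hleast d.2)
  let r := cocompactMapOfIsLeastInterIci Ordinal.isOpen_Iic_Iio Ordinal.isCompact_Iic_Iio hD.1
    hleast
  let ι : CocompactMap D Omega1 :=
    ⟨⟨Subtype.val, continuous_subtype_val⟩, hD.1.isClosedEmbedding_subtypeVal.tendsto_cocompact⟩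
  let S : C₀(↥D, ℝ) →ₗᵢ[ℝ] C₀(Omega1, ℝ) :=
    { ZeroAtInftyContinuousMap.compLinearMap r with
      norm_map' := fun g => g.norm_comp_of_surjective fun d => ⟨d, hfix d⟩ }
  refine ⟨S, ZeroAtInftyContinuousMap.compLinearMap ι, fun _ _ => rfl, fun _ _ => rfl, ?_⟩
  intro g
  ext d
  exact congrArg g (hfix d)

end
end

section
/- Let D be a club subset of [0,ω₁) and let P_D = S_D ∘ R_D, where R_D is restriction to D and S_D is composition with π_D(α) = min(D ∩ [α,ω₁)). Then P_D is a contractive linear projection on C₀[0,ω₁) whose kernel is {f ∈ C₀[0,ω₁) : f(α) = 0 for all α ∈ D}. -/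
open Set
open scoped ZeroAtInfty

noncomputable section

/-- A subset of [0,ω₁) is club if it is closed in the order topology and
unbounded (cofinal). -/
def IsClubSubset (D : Set Omega1) : Prop :=
  IsClosed D ∧ ∀ α : Omega1, ∃ β ∈ D, α ≤ β

/-!
`P_D` is composition with `π_D`, so it is linear and contractive, idempotent because
`π_D ∘ π_D = π_D`, and its kernel consists of the functions vanishing on `range π_D = D`.
The work is to see that `π_D` is a continuous cocompact self-map of `[0, ω₁)`. The preimage of a
lower set `L` under `π_D` is the lower closure of `D ∩ L`: for `L = Iic b` this is closed because
`D` is, and for `L = Iio b` it is a union of the sets `Iic d = Iio (d + 1)`, which are open.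
Cocompactness follows from `α ≤ π_D α`.
-/

namespace ZeroAtInftyContinuousMap

variable {X Y E : Type*} [TopologicalSpace X] [TopologicalSpace Y] [SeminormedAddCommGroup E]

theorem norm_comp_le (f : C₀(Y, E)) (g : CocompactMap X Y) : ‖f.comp g‖ ≤ ‖f‖ :=
  f.toBCF.norm_compContinuous_le g.toContinuousMap

section NormedField

variable (𝕜 : Type*) [NormedField 𝕜] [NormedSpace 𝕜 E]

def compCLM (g : CocompactMap X Y) : C₀(Y, E) →L[𝕜] C₀(X, E) :=
  (compLinearMap (R := 𝕜) g).mkContinuous 1 fun f => by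
    rw [one_mul]
    exact norm_comp_le f g

variable {𝕜}

@[simp]
theorem compCLM_apply (g : CocompactMap X Y) (f : C₀(Y, E)) (x : X) :
    compCLM 𝕜 g f x = f (g x) :=
  rfl

theorem compCLM_comp_compCLM_of_idempotent (g : CocompactMap X X) (hg : ∀ x, g (g x) = g x) :
    (compCLM 𝕜 g).comp (compCLM 𝕜 g) = (compCLM 𝕜 g : C₀(X, E) →L[𝕜] C₀(X, E)) := by
  ext f x
  simp [hg]

theorem compCLM_eq_zero_iff (g : CocompactMap X Y) (f : C₀(Y, E)) :
    compCLM 𝕜 g f = 0 ↔ ∀ y ∈ range g, f y = 0 := by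
  simp [ZeroAtInftyContinuousMap.ext_iff]

end NormedField

theorem norm_compCLM_le {𝕜 : Type*} [NontriviallyNormedField 𝕜] [NormedSpace 𝕜 E]
    (g : CocompactMap X Y) : ‖(compCLM 𝕜 g : C₀(Y, E) →L[𝕜] C₀(X, E))‖ ≤ 1 :=
  LinearMap.mkContinuous_norm_le _ zero_le_one _

end ZeroAtInftyContinuousMap

theorem isOpen_Iic_of_succOrder {X : Type*} [LinearOrder X] [TopologicalSpace X]
    [OrderTopology X] [SuccOrder X] (a : X) : IsOpen (Iic a) := by
  by_cases ha : IsMax a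
  · rw [ha.isTop.Iic_eq]
    exact isOpen_univ
  · rw [← Order.Iio_succ_of_not_isMax ha]
    exact isOpen_Iio

/-- The paper's `π_D(α) = min (D ∩ [α, ω₁))`. -/
def IsCeilingMap {X : Type*} [Preorder X] (D : Set X) (π : X → X) : Prop :=
  ∀ x, IsLeast (D ∩ Ici x) (π x)

namespace IsCeilingMap

section Preorder

variable {X : Type*} [Preorder X] {D : Set X} {π : X → X}

theorem mem (hπ : IsCeilingMap D π) (x : X) : π x ∈ D :=
  (hπ x).1.1

theorem le_apply (hπ : IsCeilingMap D π) (x : X) : x ≤ π x :=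
  (hπ x).1.2

theorem apply_le (hπ : IsCeilingMap D π) {x d : X} (hd : d ∈ D) (hxd : x ≤ d) : π x ≤ d :=
  (hπ x).2 ⟨hd, hxd⟩

end Preorder

section PartialOrder

variable {X : Type*} [PartialOrder X] {D : Set X} {π : X → X}

theorem apply_of_mem (hπ : IsCeilingMap D π) {x : X} (hx : x ∈ D) : π x = x :=
  (hπ.apply_le hx le_rfl).antisymm (hπ.le_apply x)

theorem apply_apply (hπ : IsCeilingMap D π) (x : X) : π (π x) = π x :=
  hπ.apply_of_mem (hπ.mem x)

theorem range_eq (hπ : IsCeilingMap D π) : range π = D :=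
  (range_subset_iff.2 hπ.mem).antisymm fun x hx => ⟨x, hπ.apply_of_mem hx⟩

theorem preimage_eq_lowerClosure (hπ : IsCeilingMap D π) {L : Set X} (hL : IsLowerSet L) :
    π ⁻¹' L = lowerClosure (D ∩ L) := by
  ext x
  simp only [mem_preimage, SetLike.mem_coe, mem_lowerClosure, mem_inter_iff]
  exact ⟨fun h => ⟨π x, ⟨hπ.mem x, h⟩, hπ.le_apply x⟩,
    fun ⟨d, ⟨hdD, hdL⟩, hxd⟩ => hL (hπ.apply_le hdD hxd) hdL⟩

end PartialOrder

theorem tendsto_cocompact {X : Type*} [LinearOrder X] [TopologicalSpace X] [ClosedIciTopology X]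
    [CompactIccSpace X] [OrderBot X] {D : Set X} {π : X → X} (hπ : IsCeilingMap D π) :
    Filter.Tendsto π (Filter.cocompact X) (Filter.cocompact X) := by
  refine (Filter.hasBasis_cocompact.tendsto_iff Filter.hasBasis_cocompact).2 fun K hK => ?_
  obtain ⟨b, hb⟩ := hK.bddAbove
  exact ⟨Icc ⊥ b, isCompact_Icc, fun x hx hπx => hx ⟨bot_le, (hπ.le_apply x).trans (hb hπx)⟩⟩

section ConditionallyCompleteLinearOrder

variable {X : Type*} [ConditionallyCompleteLinearOrder X] [TopologicalSpace X] [OrderTopology X]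
  [SuccOrder X] {D : Set X} {π : X → X}

theorem continuous (hπ : IsCeilingMap D π) (hD : IsClosed D) : Continuous π := by
  refine OrderTopology.continuous_iff.2 fun b => ⟨?_, ?_⟩
  · rw [← compl_Iic, preimage_compl, isOpen_compl_iff,
      hπ.preimage_eq_lowerClosure (isLowerSet_Iic b)]
    exact (hD.inter isClosed_Iic).lowerClosure
  · rw [hπ.preimage_eq_lowerClosure (isLowerSet_Iio b), coe_lowerClosure]
    exact isOpen_biUnion fun d _ => isOpen_Iic_of_succOrder d

def toCocompactMap [OrderBot X] (hπ : IsCeilingMap D π) (hD : IsClosed D) : CocompactMap X X :=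
  ⟨⟨π, hπ.continuous hD⟩, hπ.tendsto_cocompact⟩

end ConditionallyCompleteLinearOrder

end IsCeilingMap

-- Makes `Omega1` a conditionally complete linear order, via `OrdConnected` subsets.
instance : Inhabited Omega1 :=
  ⟨⟨0, (Cardinal.isSuccLimit_ord (Cardinal.aleph0_le_aleph 1)).bot_lt⟩⟩

instance : OrderBot Omega1 :=
  WellFoundedLT.toOrderBot Omega1

/-- For a club subset D of [0,ω₁) and π_D(α) = min(D ∩ [α,ω₁)), the operator
P_D = S_D ∘ R_D, i.e. (P_D f)(α) = f(π_D α), is a well-defined contractive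
linear projection on C₀[0,ω₁) with kernel {f : f(α) = 0 for all α ∈ D}. -/
theorem PD_contractive_projection {D : Set Omega1} (hD : IsClubSubset D)
    (π : Omega1 → Omega1)
    (hπ : ∀ α : Omega1, π α ∈ D ∧ α ≤ π α ∧ ∀ β ∈ D, α ≤ β → π α ≤ β) :
    ∃ P : C₀(Omega1, ℝ) →L[ℝ] C₀(Omega1, ℝ),
      (∀ (f : C₀(Omega1, ℝ)) (α : Omega1), P f α = f (π α)) ∧
      ‖P‖ ≤ 1 ∧ P.comp P = P ∧
      (∀ f : C₀(Omega1, ℝ), P f = 0 ↔ ∀ α ∈ D, f α = 0) := by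
  have hπD : IsCeilingMap D π := fun α =>
    ⟨⟨(hπ α).1, (hπ α).2.1⟩, fun β hβ => (hπ α).2.2 β hβ.1 hβ.2⟩
  let g := hπD.toCocompactMap hD.1
  refine ⟨ZeroAtInftyContinuousMap.compCLM ℝ g, fun _ _ => rfl,
    ZeroAtInftyContinuousMap.norm_compCLM_le g,
    ZeroAtInftyContinuousMap.compCLM_comp_compCLM_of_idempotent g hπD.apply_apply,
    fun f => ?_⟩
  rw [ZeroAtInftyContinuousMap.compCLM_eq_zero_iff]
  exact hπD.range_eq ▸ Iff.rfl
end
end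

section
/- For club subsets D and E of [0,ω₁), the ranges of the projections P_D and P_E on C₀[0,ω₁) satisfy range(P_D) ∩ range(P_E) = range(P_{D∩E}), where P_D f = (f|_D) ∘ π_D and π_D(α) = min(D ∩ [α,ω₁)). -/
open Set
open scoped ZeroAtInfty

noncomputable section

/-- π is the function α ↦ min(D ∩ [α,ω₁)). -/
def IsMinMap (D : Set Omega1) (π : Omega1 → Omega1) : Prop :=
  ∀ α : Omega1, π α ∈ D ∧ α ≤ π α ∧ ∀ β ∈ D, α ≤ β → π α ≤ β

/-- P is the operator P_D : f ↦ (f|_D) ∘ π_D on C₀[0,ω₁). -/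
def IsClubProjection (D : Set Omega1) (P : C₀(Omega1, ℝ) →L[ℝ] C₀(Omega1, ℝ)) : Prop :=
  ∃ π : Omega1 → Omega1, IsMinMap D π ∧
    ∀ (f : C₀(Omega1, ℝ)) (α : Omega1), P f α = f (π α)

/-! The inclusion `range P_{D∩E} ⊆ range P_D ∩ range P_E` holds because `π_{D∩E} ∘ π_D = π_{D∩E}`.
Conversely, if `f ∘ π_D = f = f ∘ π_E`, then `f` is constant along the nondecreasing orbit
`α ≤ π_D α ≤ π_E π_D α ≤ …`, which stays below `π_{D∩E} α`. Its supremum is a countable ordinal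
lying in the closure of both `D` and `E`, hence in `D ∩ E`, so it equals `π_{D∩E} α`, and
continuity of `f` gives `f (π_{D∩E} α) = f α`. -/

open Filter Topology

theorem Set.Iio.exists_tendsto_of_monotone {α : Type*} [ConditionallyCompleteLinearOrder α]
    [TopologicalSpace α] [OrderTopology α] {o : α} {a : ℕ → Iio o} (ha : Monotone a)
    {δ : Iio o} (hδ : ∀ n, a n ≤ δ) :
    ∃ γ : Iio o, a 0 ≤ γ ∧ γ ≤ δ ∧ Tendsto a atTop (𝓝 γ) := by
  have hbdd : BddAbove (range fun n => (a n : α)) := ⟨δ, by rintro _ ⟨n, rfl⟩; exact hδ n⟩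
  have hγδ : (⨆ n, (a n : α)) ≤ δ := ciSup_le hδ
  refine ⟨⟨⨆ n, (a n : α), hγδ.trans_lt δ.2⟩, le_ciSup hbdd 0, hγδ, ?_⟩
  exact tendsto_subtype_rng.mpr (tendsto_atTop_ciSup (fun m n h => ha h) hbdd)

namespace IsMinMap

variable {S T : Set Omega1} {π σ : Omega1 → Omega1}

theorem le_apply (hπ : IsMinMap S π) (α : Omega1) : α ≤ π α := (hπ α).2.1

theorem apply_mem (hπ : IsMinMap S π) (α : Omega1) : π α ∈ S := (hπ α).1

theorem apply_le (hπ : IsMinMap S π) {α β : Omega1} (hβ : β ∈ S) (hαβ : α ≤ β) : π α ≤ β :=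
  (hπ α).2.2 β hβ hαβ

theorem apply_apply (hπ : IsMinMap S π) (α : Omega1) : π (π α) = π α :=
  (hπ.apply_le (hπ.apply_mem α) le_rfl).antisymm (hπ.le_apply _)

theorem mem_range_iff_of_apply_eq {P : C₀(Omega1, ℝ) →L[ℝ] C₀(Omega1, ℝ)} (hπ : IsMinMap S π)
    (hP : ∀ f α, P f α = f (π α)) (f : C₀(Omega1, ℝ)) :
    f ∈ LinearMap.range (P : C₀(Omega1, ℝ) →ₗ[ℝ] C₀(Omega1, ℝ)) ↔ ∀ α, f (π α) = f α := by
  constructor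
  · rintro ⟨g, rfl⟩ α
    change P g (π α) = P g α
    rw [hP, hP, hπ.apply_apply]
  · exact fun h => ⟨f, ZeroAtInftyContinuousMap.ext fun α => (hP f α).trans (h α)⟩

theorem apply_comp_of_subset (hπ : IsMinMap S π) (hσ : IsMinMap T σ) (hTS : T ⊆ S)
    (α : Omega1) : σ (π α) = σ α := by
  have hπσ : π α ≤ σ α := hπ.apply_le (hTS (hσ.apply_mem α)) (hσ.le_apply α)
  exact (hσ.apply_le (hσ.apply_mem α) hπσ).antisymm
    (hσ.apply_le (hσ.apply_mem _) ((hπ.le_apply α).trans (hσ.le_apply _)))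

theorem invariant_of_subset {X : Type*} (hπ : IsMinMap S π) (hσ : IsMinMap T σ) (hTS : T ⊆ S)
    {f : Omega1 → X} (hf : ∀ α, f (σ α) = f α) (α : Omega1) : f (π α) = f α := by
  rw [← hf, hπ.apply_comp_of_subset hσ hTS, hf]

variable {D E : Set Omega1} {πD πE πDE : Omega1 → Omega1}

theorem tendsto_iterate_comp (hDc : IsClosed D) (hEc : IsClosed E) (hπD : IsMinMap D πD)
    (hπE : IsMinMap E πE) (hπDE : IsMinMap (D ∩ E) πDE) (α : Omega1) :
    Tendsto (fun n => (πE ∘ πD)^[n] α) atTop (𝓝 (πDE α)) := by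
  set a : ℕ → Omega1 := fun n => (πE ∘ πD)^[n] α
  have ha_succ (n : ℕ) : a (n + 1) = πE (πD (a n)) := Function.iterate_succ_apply' _ n α
  have hstep (n : ℕ) : a n ≤ πD (a n) ∧ πD (a n) ≤ a (n + 1) :=
    ⟨hπD.le_apply _, (ha_succ n).symm ▸ hπE.le_apply _⟩
  have hmem := hπDE.apply_mem α
  have hbound (n : ℕ) : a n ≤ πDE α := by
    induction n with
    | zero => exact hπDE.le_apply α
    | succ n ih => rw [ha_succ]; exact hπE.apply_le hmem.2 (hπD.apply_le hmem.1 ih)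
  obtain ⟨γ, hαγ, hγle, ha⟩ := Set.Iio.exists_tendsto_of_monotone
    (monotone_nat_of_le_succ fun n => (hstep n).1.trans (hstep n).2) hbound
  have hsucc : Tendsto (fun n => a (n + 1)) atTop (𝓝 γ) := ha.comp (tendsto_add_atTop_nat 1)
  have hγD : γ ∈ D := hDc.mem_of_tendsto
    (tendsto_of_tendsto_of_tendsto_of_le_of_le ha hsucc (fun n => (hstep n).1) fun n => (hstep n).2)
    (Eventually.of_forall fun n => hπD.apply_mem _)
  have hγE : γ ∈ E := hEc.mem_of_tendsto hsucc
    (Eventually.of_forall fun n => (ha_succ n).symm ▸ hπE.apply_mem _)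
  rwa [hγle.antisymm (hπDE.apply_le ⟨hγD, hγE⟩ hαγ)] at ha

theorem invariant_inter {X : Type*} [TopologicalSpace X] [T2Space X] (hDc : IsClosed D)
    (hEc : IsClosed E) (hπD : IsMinMap D πD) (hπE : IsMinMap E πE)
    (hπDE : IsMinMap (D ∩ E) πDE) {f : Omega1 → X} (hf : Continuous f)
    (hfD : ∀ α, f (πD α) = f α) (hfE : ∀ α, f (πE α) = f α) (α : Omega1) :
    f (πDE α) = f α := by
  have horbit (n : ℕ) : f ((πE ∘ πD)^[n] α) = f α := by
    induction n with
    | zero => rfl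
    | succ n ih => rw [Function.iterate_succ_apply', Function.comp_apply, hfE, hfD, ih]
  exact tendsto_nhds_unique ((hf.tendsto _).comp (tendsto_iterate_comp hDc hEc hπD hπE hπDE α))
    ((tendsto_congr horbit).mpr tendsto_const_nhds)

end IsMinMap

/-- For club subsets D and E of [0,ω₁),
range P_D ∩ range P_E = range P_{D∩E}. -/
theorem range_PD_inter_range_PE {D E : Set Omega1} (hD : IsClubSet D) (hE : IsClubSet E)
    {P Q R : C₀(Omega1, ℝ) →L[ℝ] C₀(Omega1, ℝ)}
    (hP : IsClubProjection D P) (hQ : IsClubProjection E Q)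
    (hR : IsClubProjection (D ∩ E) R) :
    (LinearMap.range (P : C₀(Omega1, ℝ) →ₗ[ℝ] C₀(Omega1, ℝ)) ⊓
      LinearMap.range (Q : C₀(Omega1, ℝ) →ₗ[ℝ] C₀(Omega1, ℝ)) : Submodule ℝ C₀(Omega1, ℝ)) =
      LinearMap.range (R : C₀(Omega1, ℝ) →ₗ[ℝ] C₀(Omega1, ℝ)) := by
  obtain ⟨πD, hπD, hP⟩ := hP
  obtain ⟨πE, hπE, hQ⟩ := hQ
  obtain ⟨πDE, hπDE, hR⟩ := hR
  ext f
  rw [Submodule.mem_inf, hπD.mem_range_iff_of_apply_eq hP, hπE.mem_range_iff_of_apply_eq hQ,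
    hπDE.mem_range_iff_of_apply_eq hR]
  exact ⟨fun ⟨hfD, hfE⟩ => hπD.invariant_inter hD.1 hE.1 hπE hπDE f.continuous hfD hfE,
    fun h => ⟨hπD.invariant_of_subset hπDE inter_subset_left h,
      hπE.invariant_of_subset hπDE inter_subset_right h⟩⟩

end
end

section
/- Let θ : [0,ω₁] → K be a continuous map into a Hausdorff space K. Then exactly one of the following holds: (i) [0,ω₁] contains a closed uncountable subset D on which θ is constant; (ii) [0,ω₁] contains a closed uncountable subset E on which θ is injective. -/
/-!
Identify `[0,ω₁]` with the ordinals `≤ ω₁`. A closed uncountable set of such ordinals is unbounded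
below `ω₁`, hence contains `ω₁`, and two such sets also meet below `ω₁`: a countable ordinal closed
under "next element of either set" lies in both. So a set on which `θ` is constant and one on which
`θ` is injective share two points, which is absurd.

If some fiber of `θ` is uncountable, it is closed by continuity and gives (i). Otherwise every fiber
is bounded below `ω₁`, say the fiber of `β` by `g β`; the closure points of `g` (those `x` with
`g β < x` for all `β < x`) that lie above `g ω₁` form a closed unbounded set on which `θ` is
injective.
-/

open Set

noncomputable section

/-- The compact ordinal interval [0,ω₁], with the order topology. -/
abbrev Omega1' : Type _ := ↥(Set.Iic omega1)

open Ordinal Cardinal Filter Topology Order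

universe u

theorem omega1_eq_omega_one : omega1.{u} = ω₁ := ord_aleph 1

theorem AccPt.inter_of_mem_nhds {X : Type*} [TopologicalSpace X] {x : X} {s t : Set X}
    (hs : AccPt x (𝓟 s)) (ht : t ∈ 𝓝 x) : AccPt x (𝓟 (s ∩ t)) := by
  rw [accPt_iff_frequently] at hs ⊢
  exact (hs.and_eventually ht).mono fun _ ⟨⟨hne, hys⟩, hyt⟩ => ⟨hne, hys, hyt⟩

namespace Ordinal

theorem countable_Iic_of_lt_omega_one {x : Ordinal.{u}} (hx : x < ω₁) : (Iic x).Countable := by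
  rw [← le_aleph0_iff_set_countable, ← Iio_succ, Cardinal.mk_Iio_ordinal, lift_le_aleph0,
    ← lt_aleph_one_iff, ← lt_ord, ord_aleph]
  exact (isSuccLimit_omega 1).succ_lt hx

theorem exists_lt_omega_one_forall_le_of_countable {S : Set Ordinal.{u}} (hS : S.Countable)
    (h : ∀ x ∈ S, x < ω₁) : ∃ γ < ω₁, ∀ x ∈ S, x ≤ γ := by
  have := hS.to_subtype
  exact ⟨⨆ x : S, x.1, iSup_lt_omega_one fun x => h x x.2,
    fun x hx => le_ciSup bddAbove_of_small (⟨x, hx⟩ : S)⟩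

theorem exists_forall_lt_mem_Ioo_of_accPt {a : Ordinal.{u}} {S : Set Ordinal.{u}}
    (hS : AccPt a (𝓟 S)) : ∃ f : Ordinal.{u} → Ordinal.{u}, ∀ b < a, f b ∈ S ∩ Ioo b a := by
  have hne := (SuccOrder.accPt_principal.1 hS).2
  exact ⟨fun b => if hb : b < a then (hne b hb).some else 0,
    fun b hb => by simpa only [dif_pos hb] using (hne b hb).some_mem⟩

def closurePoints (g : Ordinal.{u} → Ordinal.{u}) : Set Ordinal.{u} :=
  {x | ∀ β < x, g β < x}

theorem isClosed_closurePoints (g : Ordinal.{u} → Ordinal.{u}) : IsClosed (closurePoints g) := by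
  refine isClosed_iff_accPt.2 fun x hx β hβ => ?_
  obtain ⟨y, hy, hβy, hyx⟩ := (SuccOrder.accPt_principal.1 hx).2 β hβ
  exact (hy β hβy).trans hyx

theorem accPt_omega_one_closurePoints {g : Ordinal.{u} → Ordinal.{u}}
    (hg : ∀ β < ω₁, g β < ω₁) : AccPt ω₁ (𝓟 (closurePoints g)) := by
  refine SuccOrder.accPt_principal.2 ⟨not_isMin_of_lt (omega_pos 1), fun γ hγ => ?_⟩
  let h : Ordinal.{u} → Ordinal.{u} := fun x => succ (x ⊔ ⨆ β : Iic x, g β)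
  have lt_h (x : Ordinal.{u}) : x < h x := lt_succ_of_le le_sup_left
  have g_lt_h {x β : Ordinal.{u}} (hβ : β ≤ x) : g β < h x :=
    lt_succ_of_le (le_sup_of_le_right (le_ciSup bddAbove_of_small (⟨β, hβ⟩ : Iic x)))
  have h_lt {x : Ordinal.{u}} (hx : x < ω₁) : h x < ω₁ := by
    have := (countable_Iic_of_lt_omega_one hx).to_subtype
    exact (isSuccLimit_omega 1).succ_lt
      (max_lt hx (iSup_lt_omega_one fun β => hg β (β.2.trans_lt hx)))
  refine ⟨nfp h γ, fun β hβ => ?_, (lt_h γ).trans_le (iterate_le_nfp h γ 1),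
    nfp_lt_ord (by simp) (fun x hx => h_lt hx) hγ⟩
  obtain ⟨n, hn⟩ := lt_nfp_iff.1 hβ
  calc g β < h (h^[n] γ) := g_lt_h hn.le
    _ = h^[n + 1] γ := (Function.iterate_succ_apply' h n γ).symm
    _ ≤ nfp h γ := iterate_le_nfp h γ (n + 1)

theorem exists_lt_omega_one_mem_inter {S T : Set Ordinal.{u}} (hS : IsClosed S) (hT : IsClosed T)
    (hSω : AccPt ω₁ (𝓟 S)) (hTω : AccPt ω₁ (𝓟 T)) : ∃ x < ω₁, x ∈ S ∧ x ∈ T := by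
  obtain ⟨f, hf⟩ := exists_forall_lt_mem_Ioo_of_accPt hSω
  obtain ⟨f', hf'⟩ := exists_forall_lt_mem_Ioo_of_accPt hTω
  have hg : ∀ β < ω₁, f β ⊔ f' β < ω₁ := fun β hβ => max_lt (hf β hβ).2.2 (hf' β hβ).2.2
  obtain ⟨x, hx, hx0, hxω⟩ :=
    (SuccOrder.accPt_principal.1 (accPt_omega_one_closurePoints hg)).2 0 (omega_pos 1)
  -- `x` is a limit of the points `f β ∈ S` and `f' β ∈ T` for `β < x`, hence lies in `S` and `T`.
  have mem {U : Set Ordinal.{u}} (hU : IsClosed U) {e : Ordinal.{u} → Ordinal.{u}}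
      (he : ∀ β < ω₁, e β ∈ U ∩ Ioo β ω₁) (hex : ∀ β, e β ≤ f β ⊔ f' β) : x ∈ U :=
    isClosed_iff_accPt.1 hU x <| SuccOrder.accPt_principal.2 ⟨not_isMin_of_lt hx0, fun β hβ =>
      ⟨e β, (he β (hβ.trans hxω)).1, (he β (hβ.trans hxω)).2.1, (hex β).trans_lt (hx β hβ)⟩⟩
  exact ⟨x, hxω, mem hS hf fun _ => le_sup_left, mem hT hf' fun _ => le_sup_right⟩

end Ordinal

namespace Omega1'

theorem coe_le_omega_one (x : Omega1'.{u}) : (x : Ordinal.{u}) ≤ ω₁ :=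
  omega1_eq_omega_one ▸ x.2

theorem accPt_omega_one_image_val {D : Set Omega1'.{u}} (hD : ¬D.Countable) :
    AccPt ω₁ (𝓟 (Subtype.val '' D)) := by
  refine SuccOrder.accPt_principal.2 ⟨not_isMin_of_lt (omega_pos 1), fun γ hγ => ?_⟩
  by_contra hempty
  refine hD (countable_of_injective_of_countable_image Subtype.val_injective.injOn ?_)
  refine ((countable_Iic_of_lt_omega_one hγ).union (countable_singleton ω₁)).mono ?_
  rintro _ ⟨x, hx, rfl⟩
  rcases (coe_le_omega_one x).lt_or_eq with hxω | hxω
  · exact Or.inl (not_lt.1 fun hγx => hempty ⟨x, ⟨x, hx, rfl⟩, hγx, hxω⟩)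
  · exact Or.inr hxω

theorem not_countable_preimage_val {S : Set Ordinal.{u}} (hS : AccPt ω₁ (𝓟 S)) :
    ¬(Subtype.val ⁻¹' S : Set Omega1'.{u}).Countable := by
  intro hcount
  obtain ⟨γ, hγ, hbound⟩ := exists_lt_omega_one_forall_le_of_countable
    ((hcount.image Subtype.val).mono (inter_subset_left (t := Iio ω₁))) fun _ h => h.2
  obtain ⟨x, hxS, hγx, hxω⟩ := (SuccOrder.accPt_principal.1 hS).2 γ hγ
  have hx : x ≤ omega1 := omega1_eq_omega_one ▸ hxω.le
  exact (hbound x ⟨⟨⟨x, hx⟩, hxS, rfl⟩, hxω⟩).not_gt hγx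

theorem isClosed_image_val {D : Set Omega1'.{u}} (hD : IsClosed D) :
    IsClosed (Subtype.val '' D) :=
  isClosed_Iic.isClosedEmbedding_subtypeVal.isClosedMap _ hD

theorem exists_ne_mem_inter {D E : Set Omega1'.{u}} (hDc : IsClosed D) (hDu : ¬D.Countable)
    (hEc : IsClosed E) (hEu : ¬E.Countable) : ∃ x ∈ D ∩ E, ∃ y ∈ D ∩ E, x ≠ y := by
  have hDω := accPt_omega_one_image_val hDu
  have hEω := accPt_omega_one_image_val hEu
  obtain ⟨_, hxω, ⟨x, hxD, rfl⟩, ⟨x', hx'E, hx'x⟩⟩ := exists_lt_omega_one_mem_inter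
    (isClosed_image_val hDc) (isClosed_image_val hEc) hDω hEω
  obtain ⟨y, hyD, hyω⟩ := isClosed_iff_accPt.1 (isClosed_image_val hDc) _ hDω
  obtain ⟨y', hy'E, hy'ω⟩ := isClosed_iff_accPt.1 (isClosed_image_val hEc) _ hEω
  obtain rfl : x = x' := (Subtype.ext hx'x).symm
  obtain rfl : y = y' := Subtype.ext (hyω.trans hy'ω.symm)
  exact ⟨x, ⟨hxD, hx'E⟩, y, ⟨hyD, hy'E⟩, fun hxy => hxω.ne (hxy ▸ hyω)⟩

theorem exists_isClosed_not_countable_injOn {X : Type*} (θ : Omega1'.{u} → X)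
    (hθ : ∀ y, (θ ⁻¹' {y}).Countable) :
    ∃ E : Set Omega1'.{u}, IsClosed E ∧ ¬E.Countable ∧ InjOn θ E := by
  have hfiber (y : Omega1'.{u}) :
      ∃ γ < ω₁, ∀ z : Omega1'.{u}, θ z = θ y → z.1 < ω₁ → z.1 ≤ γ := by
    obtain ⟨γ, hγ, hbound⟩ := exists_lt_omega_one_forall_le_of_countable
      (((hθ (θ y)).image Subtype.val).mono (inter_subset_left (t := Iio ω₁))) fun _ h => h.2
    exact ⟨γ, hγ, fun z hz hzω => hbound z ⟨⟨z, hz, rfl⟩, hzω⟩⟩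
  choose g' hg'ω hg' using hfiber
  let g : Ordinal.{u} → Ordinal.{u} := fun β => g' (projIic omega1 β)
  have hg (z y : Omega1'.{u}) (h : θ z = θ y) (hz : z.1 < ω₁) : z.1 ≤ g y := by
    simpa only [g, projIic_coe] using hg' y z h hz
  let C := closurePoints g ∩ Ioi (g ω₁)
  refine ⟨Subtype.val ⁻¹' C, ?_, not_countable_preimage_val ?_, ?_⟩
  · refine ((isClosed_closurePoints g).inter ?_).preimage continuous_subtype_val
    exact Ici_succ (g ω₁) ▸ isClosed_Ici
  · exact (accPt_omega_one_closurePoints fun β _ => hg'ω _).inter_of_mem_nhds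
      (isOpen_Ioi.mem_nhds (hg'ω _))
  · have not_lt_of_eq (x : Omega1'.{u}) (hx : x.1 ∈ C) (y : Omega1'.{u}) (hy : y.1 ∈ C)
        (hxy : θ x = θ y) : ¬x < y := by
      intro hlt
      rcases (coe_le_omega_one y).lt_or_eq with hyω | hyω
      · exact (hy.1 x hlt).not_ge (hg y x hxy.symm hyω)
      · exact hx.2.not_ge (hyω ▸ hg x y hxy (hyω ▸ hlt))
    intro x hx y hy hxy
    exact le_antisymm (not_lt.1 (not_lt_of_eq y hy x hx hxy.symm))
      (not_lt.1 (not_lt_of_eq x hx y hy hxy))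

end Omega1'

/-- For every continuous map θ from [0,ω₁] into a Hausdorff space K, exactly
one of the following holds: (i) there is a closed uncountable subset of
[0,ω₁] on which θ is constant; (ii) there is a closed uncountable subset of
[0,ω₁] on which θ is injective. -/
theorem constant_or_injective_on_closed_uncountable
    {K : Type*} [TopologicalSpace K] [T2Space K]
    (θ : Omega1' → K) (hθ : Continuous θ) :
    Xor'
      (∃ D : Set Omega1', IsClosed D ∧ ¬D.Countable ∧
        ∀ x ∈ D, ∀ y ∈ D, θ x = θ y)
      (∃ E : Set Omega1', IsClosed E ∧ ¬E.Countable ∧ Set.InjOn θ E) := by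
  refine (xor_iff_or_and_not_and _ _).2 ⟨?_, ?_⟩
  · by_cases hfiber : ∃ y, ¬(θ ⁻¹' {y}).Countable
    · obtain ⟨y, hy⟩ := hfiber
      exact Or.inl ⟨θ ⁻¹' {y}, isClosed_singleton.preimage hθ, hy,
        fun a ha b hb => ha.trans hb.symm⟩
    · exact Or.inr (Omega1'.exists_isClosed_not_countable_injOn θ (not_exists_not.1 hfiber))
  · rintro ⟨⟨D, hDc, hDu, hDθ⟩, ⟨E, hEc, hEu, hEθ⟩⟩
    obtain ⟨x, hx, y, hy, hxy⟩ := Omega1'.exists_ne_mem_inter hDc hDu hEc hEu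
    exact hxy (hEθ hx.2 hy.2 (hDθ x hx.1 y hy.1))

end
end

section
/- The one-point compactification of the ordinal interval [0,ω₁) (that is, the space [0,ω₁]) is not Eberlein compact: it is not homeomorphic to any weakly compact subset of a Banach space. -/
/-!
Eberlein compacta have countable tightness, because the weak topology of every normed space does
(Kaplansky). Indeed, if `p` lies in the weak closure of `A`, then for all `n` and `k` the compact
set of `n`-tuples of functionals of norm at most `k` (Banach–Alaoglu) is covered by finitely many
of the open sets `{z | ∀ i, ‖z i a - z i p‖ < 1 / (k + 1)}`, `a ∈ A`; the countably many points `a`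
so chosen already have `p` in their closure. In `[0, ω₁]`, however, `ω₁` lies in the closure of
`[0, ω₁)`, while every countable subset of `[0, ω₁)` is bounded below `ω₁`.
-/

open Set

noncomputable section

open Topology Cardinal

def HasCountableTightness (α : Type*) [TopologicalSpace α] : Prop :=
  ∀ ⦃s : Set α⦄ ⦃x : α⦄, x ∈ closure s → ∃ t ⊆ s, t.Countable ∧ x ∈ closure t

theorem Topology.IsEmbedding.hasCountableTightness {α β : Type*} [TopologicalSpace α]
    [TopologicalSpace β] {f : α → β} (hf : IsEmbedding f) (hβ : HasCountableTightness β) :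
    HasCountableTightness α := by
  intro s x hx
  obtain ⟨t, hts, htc, hxt⟩ := hβ (map_mem_closure hf.continuous hx (mapsTo_image f s))
  refine ⟨s ∩ f ⁻¹' t, inter_subset_left, (htc.preimage hf.injective).mono inter_subset_right, ?_⟩
  rwa [hf.closure_eq_preimage_closure_image, mem_preimage, image_inter_preimage,
    inter_eq_right.2 hts]

namespace WeakSpace

variable {𝕜 X : Type*} [NontriviallyNormedField 𝕜] [NormedAddCommGroup X] [NormedSpace 𝕜 X]

theorem mem_nhds_iff {p : WeakSpace 𝕜 X} {U : Set (WeakSpace 𝕜 X)} :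
    U ∈ 𝓝 p ↔ ∃ (n : ℕ) (f : Fin n → StrongDual 𝕜 X), ∃ ε > 0,
      {y : WeakSpace 𝕜 X | ∀ i, ‖f i y - f i p‖ < ε} ⊆ U := by
  classical
  refine ((topDualPairing 𝕜 X).flip.weakBilin_withSeminorms.mem_nhds_iff p U).trans ?_
  constructor
  · rintro ⟨s, ε, hε, hsU⟩
    refine ⟨s.card, fun i => s.equivFin.symm i, ε, hε, fun y hy => hsU ?_⟩
    refine (Seminorm.mem_ball _).2 (Seminorm.finset_sup_apply_lt hε fun g hg => ?_)
    have := hy (s.equivFin ⟨g, hg⟩)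
    simp only [Equiv.symm_apply_apply] at this
    exact (congrArg norm (map_sub g y p)).trans_lt this
  · rintro ⟨n, f, ε, hε, hfU⟩
    refine ⟨Finset.univ.image f, ε, hε, fun y hy => hfU fun i => ?_⟩
    have := (Seminorm.le_finset_sup_apply (Finset.mem_image_of_mem f (Finset.mem_univ i))).trans_lt
      ((Seminorm.mem_ball _).1 hy)
    exact (congrArg norm (map_sub (f i) y p)).symm.trans_lt this

theorem exists_finite_subset_forall_norm_sub_lt [ProperSpace 𝕜] {A : Set (WeakSpace 𝕜 X)}
    {p : WeakSpace 𝕜 X} (hp : p ∈ closure A) (n : ℕ) (r : ℝ) {ε : ℝ} (hε : 0 < ε) :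
    ∃ t ⊆ A, t.Finite ∧ ∀ f : Fin n → StrongDual 𝕜 X, (∀ i, ‖f i‖ ≤ r) →
      ∃ a ∈ t, ∀ i, ‖f i a - f i p‖ < ε := by
  let U (a : WeakSpace 𝕜 X) : Set (Fin n → WeakDual 𝕜 X) := {z | ∀ i, ‖z i a - z i p‖ < ε}
  have hU : ∀ a ∈ A, IsOpen (U a) := fun a _ => by
    simp only [U, ofPred_forall]
    refine isOpen_iInter_of_finite fun i => isOpen_lt ?_ continuous_const
    have hev (x : X) : Continuous fun z : Fin n → WeakDual 𝕜 X => z i x :=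
      (WeakDual.eval_continuous x).comp (continuous_apply i)
    exact ((hev a).sub (hev p)).norm
  have hcover : univ.pi (fun _ => WeakDual.toStrongDual ⁻¹' Metric.closedBall 0 r) ⊆
      ⋃ a ∈ A, U a := fun z _ => by
    obtain ⟨a, ha, haA⟩ := mem_closure_iff_nhds.1 hp _
      (mem_nhds_iff.2 ⟨n, fun i => WeakDual.toStrongDual (z i), ε, hε, subset_rfl⟩)
    exact mem_iUnion₂.2 ⟨a, haA, ha⟩
  obtain ⟨t, htA, ht, hcover_t⟩ := (isCompact_univ_pi fun _ =>
    WeakDual.isCompact_closedBall 0 r).elim_finite_subcover_image hU hcover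
  refine ⟨t, htA, ht, fun f hf => ?_⟩
  have hf' : (fun i => StrongDual.toWeakDual (f i)) ∈
      univ.pi (fun _ => WeakDual.toStrongDual ⁻¹' Metric.closedBall 0 r) :=
    fun i _ => by simpa using hf i
  obtain ⟨a, hat, ha⟩ := mem_iUnion₂.1 (hcover_t hf')
  exact ⟨a, hat, ha⟩

theorem hasCountableTightness [ProperSpace 𝕜] : HasCountableTightness (WeakSpace 𝕜 X) := by
  intro A p hp
  choose t htA ht hpt using fun n k : ℕ =>
    exists_finite_subset_forall_norm_sub_lt hp n k (Nat.inv_pos_of_nat (n := k))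
  refine ⟨⋃ (n) (k), t n k, iUnion₂_subset htA,
    countable_iUnion fun n => countable_iUnion fun k => (ht n k).countable, ?_⟩
  rw [mem_closure_iff_nhds]
  intro W hW
  obtain ⟨n, f, ε, hε, hfW⟩ := mem_nhds_iff.1 hW
  obtain ⟨k, hfk, hkε⟩ : ∃ k : ℕ, (∀ i, ‖f i‖ ≤ k) ∧ (k + 1 : ℝ)⁻¹ < ε := by
    obtain ⟨k, hk⟩ := exists_nat_gt (∑ i, ‖f i‖ + ε⁻¹)
    have hsum : ∀ i, ‖f i‖ ≤ ∑ j, ‖f j‖ := fun i =>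
      Finset.single_le_sum (fun j _ => norm_nonneg (f j)) (Finset.mem_univ i)
    have hsum_nonneg : 0 ≤ ∑ j, ‖f j‖ := Finset.sum_nonneg fun j _ => norm_nonneg (f j)
    refine ⟨k, fun i => ?_, inv_lt_of_inv_lt₀ hε ?_⟩
    · linarith [hsum i, inv_pos.2 hε]
    · linarith
  obtain ⟨a, hat, ha⟩ := hpt n k f hfk
  exact ⟨a, hfW fun i => (ha i).trans hkε, mem_iUnion₂.2 ⟨n, k, hat⟩⟩

end WeakSpace

namespace Ordinal

theorem notMem_closure_of_countable {o : Ordinal} (ho : ℵ₀ < o.cof) {s : Set Ordinal}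
    (hs : s.Countable) (hso : s ⊆ Iio o) : o ∉ closure s := by
  intro h
  have hsup := ((mem_closure_tfae o s).out 0 2).1 h
  rw [inter_eq_left.2 (hso.trans Iio_subset_Iic_self)] at hsup
  refine (sSup_lt_of_lt_cof ?_ hso).ne hsup.2
  rw [← Ordinal.lift_cof]
  exact (mk_le_aleph0_iff.2 hs.to_subtype).trans_lt (aleph0_lt_lift.2 ho)

theorem not_hasCountableTightness_Iic {o : Ordinal} (ho : ℵ₀ < o.cof) :
    ¬ HasCountableTightness (Iic o) := by
  intro h
  have hlim : Order.IsSuccLimit o := one_lt_cof_iff.1 (one_lt_aleph0.trans ho)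
  have htop : (⟨o, self_mem_Iic⟩ : Iic o) ∈ closure (Subtype.val ⁻¹' Iio o) := by
    rw [closure_subtype, Subtype.image_preimage_coe, inter_eq_right.2 Iio_subset_Iic_self]
    exact hlim.isSuccPrelimit.isLUB_Iio.mem_closure (Iio_nonempty.2 hlim.1)
  obtain ⟨t, hts, htc, ht⟩ := h htop
  rw [closure_subtype] at ht
  exact notMem_closure_of_countable ho (htc.image _) (image_subset_iff.2 hts) ht

end Ordinal

theorem omega1_interval_not_eberlein_compact_general (X : Type*)
    [NormedAddCommGroup X] [NormedSpace ℝ X]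
    (K : Set (WeakSpace ℝ X)) :
    ¬ Nonempty (Omega1' ≃ₜ ↥K) := by
  rintro ⟨h⟩
  have hcof : ℵ₀ < omega1.cof := by
    rw [omega1, ord_aleph, cof_omega_one]
    exact aleph0_lt_aleph_one
  exact Ordinal.not_hasCountableTightness_Iic hcof <|
    (IsEmbedding.subtypeVal.comp h.isEmbedding).hasCountableTightness
      WeakSpace.hasCountableTightness

/-- The ordinal interval [0,ω₁] is not Eberlein compact: it is not
homeomorphic to any weakly compact subset of a Banach space. -/
theorem omega1_interval_not_eberlein_compact (X : Type*)
    [NormedAddCommGroup X] [NormedSpace ℝ X] [CompleteSpace X]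
    (K : Set (WeakSpace ℝ X)) (hK : IsCompact K) :
    ¬ Nonempty (Omega1' ≃ₜ ↥K) :=
  omega1_interval_not_eberlein_compact_general X K

end
end

section
/- If (X_j)_{j∈J} is a family of Hilbert-generated Banach spaces, then the c₀-direct sum (⊕_{j∈J} X_j)_{c₀} is Hilbert-generated. -/
/-! Rescale the generators to `T j : H j →L[ℝ] X j` with `‖T j‖ ≤ 1`. The diagonal operator
`(h j)_j ↦ (T j (h j))_j` is then bounded from `ℓ²(H)` to `ℓ^∞(X)`. It maps the finitely
supported families, dense in `ℓ²(H)`, to finitely supported ones, so it lands in the c₀-sum.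
The closure of its range is a closed subspace containing `single i (T i a)`, hence
`single i (x i)` for every `x` and so every finitely supported family; these are dense in the
c₀-sum. -/

open Set
open scoped ENNReal

noncomputable section

/-- A Banach space X is Hilbert-generated if there are a Hilbert space H and
a bounded operator from H onto a dense subspace of X. -/
def IsHilbertGeneratedSpace (X : Type*) [NormedAddCommGroup X]
    [NormedSpace ℝ X] : Prop :=
  ∃ (H : Type) (_ : NormedAddCommGroup H) (_ : InnerProductSpace ℝ H)
    (_ : CompleteSpace H) (R : H →L[ℝ] X), DenseRange R

/-- The finitely supported elements of the ℓ∞-direct sum. -/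
def finSuppSubmodule {J : Type*} (E : J → Type*)
    [∀ j, NormedAddCommGroup (E j)] [∀ j, NormedSpace ℝ (E j)] :
    Submodule ℝ (lp E ∞) where
  carrier := {x | {j | x j ≠ 0}.Finite}
  zero_mem' := by
    simp only [Set.mem_setOf_eq, lp.coeFn_zero, Pi.zero_apply, ne_eq,
      not_true_eq_false]
    simp
  add_mem' := by
    intro x y hx hy
    refine (hx.union hy).subset fun j hj => ?_
    simp only [Set.mem_setOf_eq, lp.coeFn_add, Pi.add_apply, ne_eq] at hj
    by_contra hc
    simp only [Set.mem_union, Set.mem_setOf_eq, not_or, not_not] at hc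
    exact hj (by rw [hc.1, hc.2, add_zero])
  smul_mem' := by
    intro c x hx
    refine hx.subset fun j hj => ?_
    simp only [Set.mem_setOf_eq, lp.coeFn_smul, Pi.smul_apply, ne_eq] at hj ⊢
    intro h
    exact hj (by simp [h])

/-- The c₀-direct sum of a family of Banach spaces: the closure, inside the
ℓ∞-direct sum, of the finitely supported elements; equivalently, the families
(x_j) with {j : ‖x_j‖ ≥ ε} finite for every ε > 0, with the supremum norm. -/
def c0Sum {J : Type*} (E : J → Type*)
    [∀ j, NormedAddCommGroup (E j)] [∀ j, NormedSpace ℝ (E j)] :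
    Submodule ℝ (lp E ∞) :=
  (finSuppSubmodule E).topologicalClosure

open scoped NNReal

theorem ContinuousLinearMap.denseRange_smul {𝕜 E F : Type*} [NormedField 𝕜]
    [NormedAddCommGroup E] [NormedSpace 𝕜 E] [NormedAddCommGroup F] [NormedSpace 𝕜 F]
    {T : E →L[𝕜] F} (hT : DenseRange T) {c : 𝕜} (hc : c ≠ 0) : DenseRange ⇑(c • T) :=
  (Homeomorph.smulOfNeZero c hc).surjective.denseRange.comp hT
    (Homeomorph.smulOfNeZero c hc).continuous

theorem IsHilbertGeneratedSpace.exists_norm_le_one {X : Type*} [NormedAddCommGroup X]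
    [NormedSpace ℝ X] (hX : IsHilbertGeneratedSpace X) :
    ∃ (H : Type) (_ : NormedAddCommGroup H) (_ : InnerProductSpace ℝ H)
      (_ : CompleteSpace H) (R : H →L[ℝ] X), ‖R‖ ≤ 1 ∧ DenseRange R := by
  obtain ⟨H, _, _, _, T, hT⟩ := hX
  have hpos : 0 < ‖T‖ + 1 := by positivity
  refine ⟨H, inferInstance, inferInstance, inferInstance, (‖T‖ + 1)⁻¹ • T, ?_,
    ContinuousLinearMap.denseRange_smul hT (inv_ne_zero hpos.ne')⟩
  rw [norm_smul, norm_inv, Real.norm_of_nonneg hpos.le, inv_mul_le_one₀ hpos]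
  linarith

theorem Set.denseRange_codRestrict {α β : Type*} [TopologicalSpace β] {f : α → β}
    {s : Set β} (hfs : ∀ a, f a ∈ s) (hs : s ⊆ closure (range f)) :
    DenseRange (s.codRestrict f hfs) := by
  intro y
  rw [closure_subtype, ← range_comp]
  exact hs y.2

namespace lp

theorem eq_sum_single {J : Type*} {E : J → Type*} [∀ j, NormedAddCommGroup (E j)]
    [DecidableEq J] {p : ℝ≥0∞} {x : lp E p} {s : Finset J} (hs : ∀ j ∉ s, x j = 0) :
    x = ∑ i ∈ s, lp.single p i (x i) := by
  ext j
  rw [lp.coeFn_sum, Finset.sum_apply, Finset.sum_eq_single j]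
  · simp
  · intro i _ hij
    exact lp.single_apply_ne p i _ hij.symm
  · intro hj
    rw [hs j hj, lp.single_apply_self]

variable {J : Type*} {E F : J → Type*} [∀ j, NormedAddCommGroup (E j)]
  [∀ j, NormedSpace ℝ (E j)] [∀ j, NormedAddCommGroup (F j)] [∀ j, NormedSpace ℝ (F j)]
  {p : ℝ≥0∞} [Fact (1 ≤ p)] {T : ∀ j, E j →L[ℝ] F j} {C : ℝ≥0}

theorem norm_apply_map_le (hT : ∀ j, ‖T j‖ ≤ C) (f : lp E p) (j : J) :
    ‖T j (f j)‖ ≤ C * ‖f‖ :=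
  (T j).le_of_opNorm_le (hT j) _ |>.trans <| by
    gcongr; exact lp.norm_apply_le_norm (zero_lt_one.trans_le Fact.out).ne' f j

variable (p T) in
def diagonalToInfty (hT : ∀ j, ‖T j‖ ≤ C) : lp E p →L[ℝ] lp F ∞ :=
  LinearMap.mkContinuous
    { toFun f := ⟨fun j => T j (f j), memℓp_infty ⟨C * ‖f‖, by
        rintro _ ⟨j, rfl⟩; exact norm_apply_map_le hT f j⟩⟩
      map_add' f g := lp.ext <| funext fun j => map_add (T j) (f j) (g j)
      map_smul' c f := lp.ext <| funext fun j => map_smul (T j) c (f j) }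
    C fun f => lp.norm_le_of_forall_le (by positivity) (norm_apply_map_le hT f)

variable (hT : ∀ j, ‖T j‖ ≤ C)

@[simp]
theorem diagonalToInfty_apply (f : lp E p) (j : J) : diagonalToInfty p T hT f j = T j (f j) :=
  rfl

theorem diagonalToInfty_single [DecidableEq J] (i : J) (a : E i) :
    diagonalToInfty p T hT (lp.single p i a) = lp.single ∞ i (T i a) := by
  ext j
  rcases eq_or_ne j i with rfl | hji
  · simp
  · rw [diagonalToInfty_apply, lp.single_apply_ne p i a hji, lp.single_apply_ne ∞ i _ hji,
      map_zero]

end lp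

section c0Sum

variable {J : Type*} {E F : J → Type*} [∀ j, NormedAddCommGroup (E j)]
  [∀ j, NormedSpace ℝ (E j)] [∀ j, NormedAddCommGroup (F j)] [∀ j, NormedSpace ℝ (F j)]
  {p : ℝ≥0∞} [Fact (1 ≤ p)] {T : ∀ j, E j →L[ℝ] F j} {C : ℝ≥0} (hT : ∀ j, ‖T j‖ ≤ C)

theorem single_mem_finSuppSubmodule [DecidableEq J] (i : J) (a : F i) :
    lp.single ∞ i a ∈ finSuppSubmodule F :=
  (Set.finite_singleton i).subset fun _ hj =>
    by_contra fun hji => hj (lp.single_apply_ne _ _ _ hji)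

theorem diagonalToInfty_mem_c0Sum (hp : p ≠ ∞) (f : lp E p) :
    lp.diagonalToInfty p T hT f ∈ c0Sum F := by
  classical
  refine mem_closure_of_tendsto ((lp.hasSum_single hp f).mapL _)
    (Filter.Eventually.of_forall fun s => Submodule.sum_mem _ fun i _ => ?_)
  rw [lp.diagonalToInfty_single]
  exact single_mem_finSuppSubmodule i _

theorem c0Sum_le_topologicalClosure_range_diagonalToInfty (hTd : ∀ j, DenseRange (T j)) :
    c0Sum F ≤ (LinearMap.range (lp.diagonalToInfty p T hT).toLinearMap).topologicalClosure := by
  classical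
  refine Submodule.topologicalClosure_minimal _ (fun x hx => ?_)
    (Submodule.isClosed_topologicalClosure _)
  have hsingle (i : J) : lp.single ∞ i (x i) ∈
      (LinearMap.range (lp.diagonalToInfty p T hT).toLinearMap).topologicalClosure :=
    map_mem_closure (lp.isometry_single i).continuous (hTd i (x i)) <| by
      rintro _ ⟨a, rfl⟩
      exact ⟨lp.single p i a, lp.diagonalToInfty_single hT i a⟩
  have hfin : {j | x j ≠ 0}.Finite := hx
  rw [lp.eq_sum_single (x := x) (s := hfin.toFinset) fun j hj => by simpa using hj]
  exact Submodule.sum_mem _ fun i _ => hsingle i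

end c0Sum

theorem c0Sum_hilbertGenerated_general {J : Type} (X : J → Type)
    [∀ j, NormedAddCommGroup (X j)] [∀ j, NormedSpace ℝ (X j)]
    (h : ∀ j, IsHilbertGeneratedSpace (X j)) :
    IsHilbertGeneratedSpace ↥(c0Sum X) := by
  choose H _ _ _ T hT hTd using fun j => (h j).exists_norm_le_one
  have hL := diagonalToInfty_mem_c0Sum (C := 1) hT (p := 2) ENNReal.ofNat_ne_top
  exact ⟨lp H 2, inferInstance, inferInstance, inferInstance,
    (lp.diagonalToInfty 2 T (C := 1) hT).codRestrict _ hL,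
    Set.denseRange_codRestrict hL (c0Sum_le_topologicalClosure_range_diagonalToInfty hT hTd)⟩

/-- If every member of a family of Banach spaces is Hilbert-generated, then
their c₀-direct sum is Hilbert-generated. -/
theorem c0Sum_hilbertGenerated {J : Type} (X : J → Type)
    [∀ j, NormedAddCommGroup (X j)] [∀ j, NormedSpace ℝ (X j)]
    [∀ j, CompleteSpace (X j)]
    (h : ∀ j, IsHilbertGeneratedSpace (X j)) :
    IsHilbertGeneratedSpace ↥(c0Sum X) :=
  c0Sum_hilbertGenerated_general X h

end
end
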